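/- For integers 0 ≤ n < m ≤ l−1, the map τ(n+1, m) → τ(n, m) induced by the inclusion I^{n+1} ⊆ I^n (identity on the x^m·B factor) is an injective homomorphism of A-modules, and its cokernel is isomorphic to I^n/I^{n+1}; this cokernel is a free abelian group of rank n+1 on which the classes of x and y act by zero. -/

import Mathlib

open MvPolynomial

set_option maxHeartbeats 800000
set_option synthInstance.maxHeartbeats 200000

noncomputable section

/-- `A = ℤ[x,y]/(x^l − y^l)`, with `x = X 0`, `y = X 1`. -/
def IA (l : ℕ) : Ideal (MvPolynomial (Fin 2) ℤ) := Ideal.span {X 0 ^ l - X 1 ^ l}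

/-- `B = ℤ[x,t]/(t^l − 1)`, with `x = X 0`, `t = X 1`. -/
def IB (l : ℕ) : Ideal (MvPolynomial (Fin 2) ℤ) := Ideal.span {X 1 ^ l - 1}

abbrev Aq (l : ℕ) := MvPolynomial (Fin 2) ℤ ⧸ IA l
abbrev Bq (l : ℕ) := MvPolynomial (Fin 2) ℤ ⧸ IB l

/-- The class of `x` in `A`. -/
def xA (l : ℕ) : Aq l := Ideal.Quotient.mk (IA l) (X 0)
/-- The class of `y` in `A`. -/
def yA (l : ℕ) : Aq l := Ideal.Quotient.mk (IA l) (X 1)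
/-- The class of `x` in `B`. -/
def xB (l : ℕ) : Bq l := Ideal.Quotient.mk (IB l) (X 0)
/-- The class of `t` in `B`. -/
def tB (l : ℕ) : Bq l := Ideal.Quotient.mk (IB l) (X 1)

lemma tB_pow (l : ℕ) : tB l ^ l = 1 := by
  have h : (X 1 ^ l - 1 : MvPolynomial (Fin 2) ℤ) ∈ IB l := Ideal.subset_span rfl
  have h2 : Ideal.Quotient.mk (IB l) (X 1 ^ l - 1) = 0 :=
    Ideal.Quotient.eq_zero_iff_mem.mpr h
  have h3 : tB l ^ l - 1 = 0 := by
    rw [tB, ← map_pow, ← map_one (Ideal.Quotient.mk (IB l)), ← map_sub]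
    simpa using h2
  exact sub_eq_zero.mp h3

/-- The diagonal ring homomorphism `Δ : A → B`, determined by `x ↦ x`, `y ↦ t·x`. -/
def Δmap (l : ℕ) : Aq l →+* Bq l :=
  Ideal.Quotient.lift (IA l) ((aeval ![xB l, tB l * xB l]).toRingHom)
    (by
      intro p hp
      obtain ⟨c, rfl⟩ := Ideal.mem_span_singleton'.mp hp
      have key : (aeval ![xB l, tB l * xB l]) (X 0 ^ l - X 1 ^ l : MvPolynomial (Fin 2) ℤ) = 0 := by
        simp [mul_pow, tB_pow l]
      simp only [AlgHom.toRingHom_eq_coe, RingHom.coe_coe, map_mul, key, mul_zero])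

lemma Δmap_xA (l : ℕ) : Δmap l (xA l) = xB l := by
  simp [Δmap, xA]

lemma Δmap_yA (l : ℕ) : Δmap l (yA l) = tB l * xB l := by
  simp [Δmap, yA]

/-- The ideal `I = (x, y) ⊆ A`. -/
def Iid (l : ℕ) : Ideal (Aq l) := Ideal.span {xA l, yA l}

/-- `B` is an `A`-algebra (hence an `A`-module) via `Δ`. -/
instance instAlgAB (l : ℕ) : Algebra (Aq l) (Bq l) := (Δmap l).toAlgebra

/-- The `A`-submodule `x^m·B = {x^m·b : b ∈ B}` of `B`. -/
def xmB (l m : ℕ) : Submodule (Aq l) (Bq l) :=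
  LinearMap.range (LinearMap.mulLeft (Aq l) (xB l ^ m))

/-- The submodule `N_m = {(Δ(c), −c) : c ∈ I^m}` of `(x^m·B) ⊕ I^a`.  (The displayed set is
already an `A`-submodule, so taking its span does not change it.) -/
def Nsub (l a m : ℕ) : Submodule (Aq l) (↥(xmB l m) × ↥(Iid l ^ a)) :=
  Submodule.span (Aq l)
    {p | ∃ c ∈ Iid l ^ m, (p.1 : Bq l) = Δmap l c ∧ (p.2 : Aq l) = -c}

/-- The `A`-module `τ_{a,m} = ((x^m·B) ⊕ I^a)/N_m` of the paper. -/
abbrev τmod (l a m : ℕ) :=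
  @HasQuotient.Quotient _ _ (@Submodule.hasQuotient (Aq l) (↥(xmB l m) × ↥(Iid l ^ a)) _
    inferInstance inferInstance) (Nsub l a m)

/-!
The second coordinate `(b, c) ↦ [c]` maps `τ_{n,m}` onto `I^n/I^{n+1}`: it kills `N_m` because
`m ≥ n + 1`, and its kernel is the image of `(x^m B) ⊕ I^{n+1}`, i.e. of `τ_{n+1,m}`. That map
`τ_{n+1,m} → τ_{n,m}` is injective because `N_m` is the same set of pairs `(Δ c, -c)`, `c ∈ I^m`,
on both sides. Finally `I^n/I^{n+1}` is a quotient of `(x,y)^n ⊆ ℤ[x,y]`, and since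
`x^l - y^l` only has monomials of degree `l > n`, reading off the coefficients of
`x^(n-i) y^i` identifies it with `ℤ^(n+1)`.
-/

open Finsupp in
def bideg (n i : ℕ) : Fin 2 →₀ ℕ := single 0 (n - i) + single 1 i

section Polynomial

variable {R : Type*} [CommRing R] {n : ℕ}

lemma bideg_apply_one (n i : ℕ) : bideg n i 1 = i := by simp [bideg]

lemma degree_bideg {i : ℕ} (hi : i ≤ n) : (bideg n i).degree = n := by
  simp [bideg, Finsupp.degree_eq_sum, Fin.sum_univ_two]
  omega

lemma eq_bideg_of_degree_eq {d : Fin 2 →₀ ℕ} (hd : d.degree = n) : d = bideg n (d 1) := by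
  rw [Finsupp.degree_eq_sum, Fin.sum_univ_two] at hd
  ext j
  fin_cases j <;> simp [bideg]; omega

variable (R n) in
def coeffsDeg : MvPolynomial (Fin 2) R →ₗ[R] (Fin (n + 1) → R) :=
  LinearMap.pi fun i => lcoeff R (bideg n i)

lemma coeffsDeg_apply (p : MvPolynomial (Fin 2) R) (i : Fin (n + 1)) :
    coeffsDeg R n p i = p.coeff (bideg n i) := rfl

lemma coeffsDeg_eq_zero_iff {p : MvPolynomial (Fin 2) R} (hp : p ∈ idealOfVars (Fin 2) R ^ n) :
    coeffsDeg R n p = 0 ↔ p ∈ idealOfVars (Fin 2) R ^ (n + 1) := by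
  rw [mem_pow_idealOfVars_iff'] at hp ⊢
  constructor
  · intro h d hd
    rcases Nat.lt_succ_iff_lt_or_eq.mp hd with hd | hd
    · exact hp d hd
    · rw [eq_bideg_of_degree_eq hd]
      have hd1 : d 1 < n + 1 := by
        rw [Finsupp.degree_eq_sum, Fin.sum_univ_two] at hd
        omega
      exact congrFun h ⟨d 1, hd1⟩
  · intro h
    funext i
    exact h _ (by rw [degree_bideg (Nat.lt_succ_iff.mp i.2)]; omega)

lemma exists_mem_pow_coeffsDeg_eq (v : Fin (n + 1) → R) :
    ∃ p ∈ idealOfVars (Fin 2) R ^ n, coeffsDeg R n p = v := by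
  refine ⟨∑ i : Fin (n + 1), monomial (bideg n i) (v i), Ideal.sum_mem _ fun i _ => ?_, ?_⟩
  · refine (mem_pow_idealOfVars_iff _ _).mpr fun d hd => ?_
    rw [Finset.mem_singleton.mp (support_monomial_subset hd),
      degree_bideg (Nat.lt_succ_iff.mp i.2)]
  · have hinj : ∀ i j : Fin (n + 1), bideg n i = bideg n j ↔ i = j := fun i j =>
      ⟨fun h => Fin.ext (by simpa [bideg_apply_one] using congrArg (· 1) h), fun h => h ▸ rfl⟩
    funext j
    simp [coeffsDeg_apply, coeff_sum, coeff_monomial, hinj]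

end Polynomial

section GradedPiece

variable {l n : ℕ}

lemma IA_le_pow_idealOfVars (l : ℕ) : IA l ≤ idealOfVars (Fin 2) ℤ ^ l := by
  rw [IA, Ideal.span_le, Set.singleton_subset_iff, SetLike.mem_coe]
  exact Ideal.sub_mem _ (Ideal.pow_mem_pow (Ideal.subset_span (Set.mem_range_self 0)) l)
    (Ideal.pow_mem_pow (Ideal.subset_span (Set.mem_range_self 1)) l)

lemma Iid_eq_map (l : ℕ) : Iid l = (idealOfVars (Fin 2) ℤ).map (Ideal.Quotient.mk (IA l)) := by
  rw [Ideal.map_span, ← Set.range_comp, Iid, Fin.range_fin_succ]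
  simp [xA, yA, Set.range_unique, Fin.tail]

lemma mem_Iid_pow_iff {k : ℕ} {a : Aq l} :
    a ∈ Iid l ^ k ↔ ∃ p ∈ idealOfVars (Fin 2) ℤ ^ k, Ideal.Quotient.mk (IA l) p = a := by
  rw [Iid_eq_map, ← Ideal.map_pow]
  exact Ideal.mem_map_iff_of_surjective _ Ideal.Quotient.mk_surjective

def coeffsDegA (hnl : n < l) : Aq l →ₗ[ℤ] (Fin (n + 1) → ℤ) :=
  ((IA l).restrictScalars ℤ).liftQ (coeffsDeg ℤ n) (fun _ hp =>
    (coeffsDeg_eq_zero_iff (Ideal.pow_le_pow_right hnl.le (IA_le_pow_idealOfVars l hp))).mpr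
      (Ideal.pow_le_pow_right hnl (IA_le_pow_idealOfVars l hp))) ∘ₗ
    (Submodule.Quotient.restrictScalarsEquiv ℤ (IA l)).symm.toLinearMap

lemma coeffsDegA_mk (hnl : n < l) (p : MvPolynomial (Fin 2) ℤ) :
    coeffsDegA hnl (Ideal.Quotient.mk (IA l) p) = coeffsDeg ℤ n p := rfl

lemma coeffsDegA_eq_zero_iff (hnl : n < l) {a : Aq l} (ha : a ∈ Iid l ^ n) :
    coeffsDegA hnl a = 0 ↔ a ∈ Iid l ^ (n + 1) := by
  constructor
  · obtain ⟨p, hp, rfl⟩ := mem_Iid_pow_iff.mp ha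
    rw [coeffsDegA_mk, coeffsDeg_eq_zero_iff hp]
    exact fun h => mem_Iid_pow_iff.mpr ⟨p, h, rfl⟩
  · intro h
    obtain ⟨q, hq, rfl⟩ := mem_Iid_pow_iff.mp h
    exact (coeffsDeg_eq_zero_iff (Ideal.pow_le_pow_right n.le_succ hq)).mpr hq

lemma exists_mem_Iid_pow_coeffsDegA_eq (hnl : n < l) (v : Fin (n + 1) → ℤ) :
    ∃ a ∈ Iid l ^ n, coeffsDegA hnl a = v := by
  obtain ⟨p, hp, rfl⟩ := exists_mem_pow_coeffsDeg_eq (n := n) v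
  exact ⟨_, mem_Iid_pow_iff.mpr ⟨p, hp, rfl⟩, coeffsDegA_mk hnl p⟩

variable (l n) in
abbrev gradedPiece := ↥(Iid l ^ n) ⧸ Submodule.comap (Iid l ^ n).subtype (Iid l ^ (n + 1))

lemma ker_coeffsDegA_comp_subtype (hnl : n < l) :
    LinearMap.ker (coeffsDegA hnl ∘ₗ (Iid l ^ n).subtype.restrictScalars ℤ) =
      (Submodule.comap (Iid l ^ n).subtype (Iid l ^ (n + 1))).restrictScalars ℤ := by
  ext c
  exact coeffsDegA_eq_zero_iff hnl c.2

def gradedPieceAddEquiv (hnl : n < l) : gradedPiece l n ≃+ (Fin (n + 1) → ℤ) :=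
  ((Submodule.Quotient.restrictScalarsEquiv ℤ _).symm ≪≫ₗ
    Submodule.quotEquivOfEq _ _ (ker_coeffsDegA_comp_subtype hnl).symm ≪≫ₗ
    LinearMap.quotKerEquivOfSurjective _ fun v => by
      obtain ⟨a, ha, rfl⟩ := exists_mem_Iid_pow_coeffsDegA_eq hnl v
      exact ⟨⟨a, ha⟩, rfl⟩).toAddEquiv

lemma smul_gradedPiece_eq_zero {r : Aq l} (hr : r ∈ Iid l) (w : gradedPiece l n) : r • w = 0 := by
  obtain ⟨c, rfl⟩ := Submodule.mkQ_surjective _ w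
  rw [Submodule.mkQ_apply, ← Submodule.Quotient.mk_smul, Submodule.Quotient.mk_eq_zero,
    Submodule.mem_comap, Submodule.subtype_apply, Submodule.coe_smul, smul_eq_mul,
    Ideal.IsTwoSided.pow_succ]
  exact Ideal.mul_mem_mul hr c.2

end GradedPiece

section Diagonal

variable {l : ℕ}

lemma Δmap_mem_xmB {m : ℕ} {c : Aq l} (hc : c ∈ Iid l ^ m) : Δmap l c ∈ xmB l m := by
  have hI : (Iid l).map (Δmap l) ≤ Ideal.span {xB l} := by
    rw [Iid, Ideal.map_span, Ideal.span_le, Set.image_pair, Set.pair_subset_iff, Δmap_xA, Δmap_yA]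
    exact ⟨Ideal.subset_span rfl, Ideal.mem_span_singleton'.mpr ⟨tB l, rfl⟩⟩
  have hIm : (Iid l ^ m).map (Δmap l) ≤ Ideal.span {xB l ^ m} := by
    rw [Ideal.map_pow, ← Ideal.span_singleton_pow]
    exact Ideal.pow_right_mono hI m
  obtain ⟨b, hb⟩ := Ideal.mem_span_singleton.mp (hIm (Ideal.mem_map_of_mem _ hc))
  exact ⟨b, hb.symm⟩

variable (l) in
def diagMap {a m : ℕ} (ham : a ≤ m) : ↥(Iid l ^ m) →ₗ[Aq l] ↥(xmB l m) × ↥(Iid l ^ a) :=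
  (LinearMap.codRestrict (xmB l m) (Algebra.linearMap (Aq l) (Bq l) ∘ₗ (Iid l ^ m).subtype)
      fun c => Δmap_mem_xmB c.2).prod
    (-Submodule.inclusion (Ideal.pow_le_pow_right ham))

lemma coe_range_diagMap {a m : ℕ} (ham : a ≤ m) :
    (LinearMap.range (diagMap l ham) : Set (↥(xmB l m) × ↥(Iid l ^ a))) =
      {p | ∃ c ∈ Iid l ^ m, (p.1 : Bq l) = Δmap l c ∧ (p.2 : Aq l) = -c} := by
  ext p
  constructor
  · rintro ⟨c, rfl⟩
    exact ⟨c, c.2, rfl, rfl⟩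
  · rintro ⟨c, hc, h1, h2⟩
    exact ⟨⟨c, hc⟩, Prod.ext (Subtype.ext h1.symm) (Subtype.ext h2.symm)⟩

lemma mem_Nsub_iff {a m : ℕ} (ham : a ≤ m) {p : ↥(xmB l m) × ↥(Iid l ^ a)} :
    p ∈ Nsub l a m ↔ ∃ c ∈ Iid l ^ m, (p.1 : Bq l) = Δmap l c ∧ (p.2 : Aq l) = -c := by
  rw [Nsub, ← coe_range_diagMap ham, Submodule.span_eq, ← SetLike.mem_coe, coe_range_diagMap]
  rfl

end Diagonal

section Inclusion

variable (l : ℕ) {n m : ℕ}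

variable (n m) in
abbrev powSuccInclusion : ↥(xmB l m) × ↥(Iid l ^ (n + 1)) →ₗ[Aq l] ↥(xmB l m) × ↥(Iid l ^ n) :=
  LinearMap.id.prodMap (Submodule.inclusion (Ideal.pow_le_pow_right n.le_succ))

lemma powSuccInclusion_mem_Nsub_iff (hnm : n < m) {p : ↥(xmB l m) × ↥(Iid l ^ (n + 1))} :
    powSuccInclusion l n m p ∈ Nsub l n m ↔ p ∈ Nsub l (n + 1) m := by
  rw [mem_Nsub_iff hnm.le, mem_Nsub_iff hnm]
  rfl

def incMap (hnm : n < m) : τmod l (n + 1) m →ₗ[Aq l] τmod l n m :=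
  Submodule.mapQ _ _ (powSuccInclusion l n m) fun _ hp =>
    (powSuccInclusion_mem_Nsub_iff l hnm).mpr hp

lemma incMap_injective (hnm : n < m) : Function.Injective (incMap l hnm) := by
  have hcomap : (Nsub l n m).comap (powSuccInclusion l n m) = Nsub l (n + 1) m := by
    ext p
    exact powSuccInclusion_mem_Nsub_iff l hnm
  rw [← LinearMap.ker_eq_bot, incMap, Submodule.ker_mapQ, hcomap, Submodule.mkQ_map_self]

def cokerProj (hnm : n < m) : τmod l n m →ₗ[Aq l] gradedPiece l n :=
  Submodule.mapQ _ _ (LinearMap.snd (Aq l) ↥(xmB l m) ↥(Iid l ^ n)) fun p hp => by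
    obtain ⟨c, hc, -, h2⟩ := (mem_Nsub_iff hnm.le).mp hp
    rw [Submodule.mem_comap, LinearMap.snd_apply, Submodule.mem_comap, Submodule.subtype_apply,
      h2]
    exact neg_mem (Ideal.pow_le_pow_right hnm hc)

lemma cokerProj_surjective (hnm : n < m) : Function.Surjective (cokerProj l hnm) := by
  intro w
  obtain ⟨c, rfl⟩ := Submodule.mkQ_surjective _ w
  exact ⟨Submodule.Quotient.mk (0, c), rfl⟩

lemma ker_cokerProj (hnm : n < m) :
    LinearMap.ker (cokerProj l hnm) = LinearMap.range (incMap l hnm) := by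
  rw [cokerProj, Submodule.ker_mapQ, Submodule.comap_snd, incMap, Submodule.range_mapQ,
    LinearMap.range_prodMap, LinearMap.range_id, Submodule.range_inclusion]

def cokerEquiv (hnm : n < m) :
    (τmod l n m ⧸ LinearMap.range (incMap l hnm)) ≃ₗ[Aq l] gradedPiece l n :=
  Submodule.quotEquivOfEq _ _ (ker_cokerProj l hnm).symm ≪≫ₗ
    (cokerProj l hnm).quotKerEquivOfSurjective (cokerProj_surjective l hnm)

end Inclusion

theorem stmt_14_general (l : ℕ) (n m : ℕ) (hnm : n < m) (hm : m ≤ l - 1) :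
    ∃ f : τmod l (n + 1) m →ₗ[Aq l] τmod l n m,
      (∀ p : ↥(xmB l m) × ↥(Iid l ^ (n + 1)),
        f (Submodule.Quotient.mk p) =
          Submodule.Quotient.mk
            (p.1, Submodule.inclusion (Ideal.pow_le_pow_right (Nat.le_succ n)) p.2)) ∧
      Function.Injective f ∧
      Nonempty ((τmod l n m ⧸ LinearMap.range f) ≃ₗ[Aq l]
        (↥(Iid l ^ n) ⧸ Submodule.comap (Iid l ^ n).subtype (Iid l ^ (n + 1)))) ∧
      Nonempty ((τmod l n m ⧸ LinearMap.range f) ≃+ (Fin (n + 1) → ℤ)) ∧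
      ∀ v : τmod l n m ⧸ LinearMap.range f, xA l • v = 0 ∧ yA l • v = 0 := by
  have hnl : n < l := by omega
  let e := cokerEquiv l hnm
  have hsmul (r : Aq l) (hr : r ∈ Iid l) (v : τmod l n m ⧸ LinearMap.range (incMap l hnm)) :
      r • v = 0 :=
    e.injective (by rw [map_smul, map_zero, smul_gradedPiece_eq_zero hr])
  exact ⟨incMap l hnm, fun _ => rfl, incMap_injective l hnm, ⟨e⟩,
    ⟨e.toAddEquiv.trans (gradedPieceAddEquiv hnl)⟩,
    fun v => ⟨hsmul _ (Ideal.subset_span (.inl rfl)) v, hsmul _ (Ideal.subset_span (.inr rfl)) v⟩⟩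

/-- For `0 ≤ n < m ≤ l−1`, the map `τ_{n+1,m} → τ_{n,m}` induced by the inclusion
`I^{n+1} ⊆ I^n` (identity on the `x^m·B` factor) is an injective homomorphism of
`A`-modules; its cokernel is isomorphic to `I^n/I^{n+1}`, and this cokernel is a free
abelian group of rank `n+1` on which the classes of `x` and `y` act by zero. -/
theorem stmt_14 (l : ℕ) (hl : 1 ≤ l) (n m : ℕ) (hnm : n < m) (hm : m ≤ l - 1) :
    ∃ f : τmod l (n + 1) m →ₗ[Aq l] τmod l n m,
      (∀ p : ↥(xmB l m) × ↥(Iid l ^ (n + 1)),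
        f (Submodule.Quotient.mk p) =
          Submodule.Quotient.mk
            (p.1, Submodule.inclusion (Ideal.pow_le_pow_right (Nat.le_succ n)) p.2)) ∧
      Function.Injective f ∧
      Nonempty ((τmod l n m ⧸ LinearMap.range f) ≃ₗ[Aq l]
        (↥(Iid l ^ n) ⧸ Submodule.comap (Iid l ^ n).subtype (Iid l ^ (n + 1)))) ∧
      Nonempty ((τmod l n m ⧸ LinearMap.range f) ≃+ (Fin (n + 1) → ℤ)) ∧
      ∀ v : τmod l n m ⧸ LinearMap.range f, xA l • v = 0 ∧ yA l • v = 0 :=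
  stmt_14_general l n m hnm hm
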